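/- Let g1 = [[0,0],[0,1]] and g2 = [[0,1],[0,0]] (2×2 matrices over F, both elements of T). If t ∈ T satisfies t·g1 = 0 and t·g2 = 0, then t = 0. Hence the cyclic left T-submodule of T² generated by (g1,g2) is free of rank 1. -/

import Mathlib

/-- The ring of ternions over `F`: the subring of `2 × 2` matrices over `F`
consisting of the upper triangular matrices (those with vanishing
`(2,1)`-entry). -/
def Ternions (F : Type*) [Field F] : Subring (Matrix (Fin 2) (Fin 2) F) where
  carrier := {M | M 1 0 = 0}
  zero_mem' := by simp
  one_mem' := by simp [Matrix.one_apply]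
  add_mem' := by
    intro a b ha hb
    simp only [Set.mem_setOf_eq] at *
    simp [Matrix.add_apply, ha, hb]
  neg_mem' := by
    intro a ha
    simp only [Set.mem_setOf_eq] at *
    simp [Matrix.neg_apply, ha]
  mul_mem' := by
    intro a b ha hb
    simp only [Set.mem_setOf_eq] at *
    simp [Matrix.mul_apply, Fin.sum_univ_two, ha, hb]

/-! Right multiplication by `g1 = E₂₂` keeps the second column of a matrix and clears the first,
right multiplication by `g2 = E₁₂` moves the first column into the second; so a matrix killed
by both has two vanishing columns. -/

namespace Matrix

variable {R : Type*} [Semiring R]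

theorem mul_fin_two_e22 (M : Matrix (Fin 2) (Fin 2) R) :
    M * !![0, 0; 0, 1] = !![0, M 0 1; 0, M 1 1] := by
  rw [M.eta_fin_two, mul_fin_two]
  simp

theorem mul_fin_two_e12 (M : Matrix (Fin 2) (Fin 2) R) :
    M * !![0, 1; 0, 0] = !![0, M 0 0; 0, M 1 0] := by
  rw [M.eta_fin_two, mul_fin_two]
  simp

theorem eq_zero_of_mul_e22_eq_zero_of_mul_e12_eq_zero {M : Matrix (Fin 2) (Fin 2) R}
    (h22 : M * !![0, 0; 0, 1] = 0) (h12 : M * !![0, 1; 0, 0] = 0) : M = 0 := by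
  rw [mul_fin_two_e22] at h22
  rw [mul_fin_two_e12] at h12
  have h00 : M 0 0 = 0 := by simpa using congr_fun₂ h12 0 1
  have h10 : M 1 0 = 0 := by simpa using congr_fun₂ h12 1 1
  have h01 : M 0 1 = 0 := by simpa using congr_fun₂ h22 0 1
  have h11 : M 1 1 = 0 := by simpa using congr_fun₂ h22 1 1
  ext i j
  fin_cases i <;> fin_cases j <;> assumption

end Matrix

/-- If a ternion `t` annihilates both components of the pair
`(g1, g2) = ([[0,0],[0,1]], [[0,1],[0,0]])`, then `t = 0`; hence the cyclic left
`T`-submodule of `T²` generated by `(g1, g2)` is free of rank `1`. -/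
theorem statement13 {F : Type*} [Field F] (t : Ternions F)
    (h1 : (t : Matrix (Fin 2) (Fin 2) F) * !![0, 0; 0, 1] = 0)
    (h2 : (t : Matrix (Fin 2) (Fin 2) F) * !![0, 1; 0, 0] = 0) :
    t = 0 :=
  ZeroMemClass.coe_eq_zero.mp (Matrix.eq_zero_of_mul_e22_eq_zero_of_mul_e12_eq_zero h1 h2)
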